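/- Let μ be an ε-product probability measure on V = V₁×⋯×V_k, let S,T ⊆ [k], and let f ∈ L²(V_S,μ_S). Then ‖A_{S,T}f − A_{S,S∩T}f‖²_{L²(μ_T)} ≤ |S|·|T|·ε²·‖f‖²_{L²(μ_S)}, where A_{S,S∩T}f is regarded as a function on V_T through y ↦ A_{S,S∩T}f(y_{S∩T}). -/

import Mathlib

open Finset

namespace GLL

variable {k : ℕ} {V : Fin k → Type} [∀ i, Fintype (V i)] [∀ i, DecidableEq (V i)]

/-- Expectation of `f` with respect to the (finitely supported) measure `μ`. -/
def expect (μ f : (∀ i, V i) → ℝ) : ℝ := ∑ x, μ x * f x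

/-- `μ` is a probability measure. -/
def IsProb (μ : (∀ i, V i) → ℝ) : Prop := (∀ x, 0 ≤ μ x) ∧ ∑ x, μ x = 1

/-- The marginal `μ_S` evaluated at (the `S`-coordinates of) `x`. -/
def marg (μ : (∀ i, V i) → ℝ) (S : Finset (Fin k)) (x : ∀ i, V i) : ℝ :=
  ∑ z, if ∀ i ∈ S, z i = x i then μ z else 0

/-- The link (conditional) measure `μ_x` for `x ∈ V_S`, viewed as a measure on
full points agreeing with `x` on `S`. -/
noncomputable def cond (μ : (∀ i, V i) → ℝ) (S : Finset (Fin k)) (x z : ∀ i, V i) : ℝ :=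
  if ∀ i ∈ S, z i = x i then μ z / marg μ S x else 0

/-- The averaging operator `A_S`: `A_S f (x) = E_{y ∼ μ_{x_S}} [f(x_S, y)]`.
Applied to an `S'`-junta `f`, this is also the operator `A_{S',S}`. -/
noncomputable def Aop (μ : (∀ i, V i) → ℝ) (S : Finset (Fin k)) (f : (∀ i, V i) → ℝ)
    (x : ∀ i, V i) : ℝ :=
  ∑ z, cond μ S x z * f z

/-- The Efron–Stein component `f^{=S} = ∑_{T ⊆ S} (-1)^{|S∖T|} A_T f`. -/
noncomputable def ES (μ : (∀ i, V i) → ℝ) (S : Finset (Fin k)) (f : (∀ i, V i) → ℝ)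
    (x : ∀ i, V i) : ℝ :=
  ∑ T ∈ S.powerset, (-1 : ℝ) ^ (S.card - T.card) * Aop μ T f x

/-- The low-degree part `f^{≤ d} = ∑_{|S| ≤ d} f^{=S}`. -/
noncomputable def lowPart (μ : (∀ i, V i) → ℝ) (d : ℕ) (f : (∀ i, V i) → ℝ)
    (x : ∀ i, V i) : ℝ :=
  ∑ S ∈ univ.powerset.filter (fun S : Finset (Fin k) => S.card ≤ d), ES μ S f x

/-- The Laplacian `L_S[f] = ∑_{T ⊇ S} f^{=T}`. -/
noncomputable def Lap (μ : (∀ i, V i) → ℝ) (S : Finset (Fin k)) (f : (∀ i, V i) → ℝ)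
    (x : ∀ i, V i) : ℝ :=
  ∑ T ∈ univ.powerset.filter (fun T : Finset (Fin k) => S ⊆ T), ES μ T f x

/-- The truncated Laplacian `L_S^{≤d}[f] = ∑_{T ⊇ S, |T| ≤ d} f^{=T}`. -/
noncomputable def LapLe (μ : (∀ i, V i) → ℝ) (d : ℕ) (S : Finset (Fin k))
    (f : (∀ i, V i) → ℝ) (x : ∀ i, V i) : ℝ :=
  ∑ T ∈ univ.powerset.filter (fun T : Finset (Fin k) => S ⊆ T ∧ T.card ≤ d), ES μ T f x

/-- The influence `I_{S,x}[f] = ‖L_S[f](x,·)‖²_{L²(μ_x)}`. -/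
noncomputable def Inf (μ : (∀ i, V i) → ℝ) (S : Finset (Fin k)) (f : (∀ i, V i) → ℝ)
    (x : ∀ i, V i) : ℝ :=
  ∑ z, cond μ S x z * (Lap μ S f z) ^ 2

/-- The truncated influence `I^{≤d}_{S,x}[f] = ‖L_S^{≤d}[f](x,·)‖²_{L²(μ_x)}`. -/
noncomputable def InfLe (μ : (∀ i, V i) → ℝ) (d : ℕ) (S : Finset (Fin k))
    (f : (∀ i, V i) → ℝ) (x : ∀ i, V i) : ℝ :=
  ∑ z, cond μ S x z * (LapLe μ d S f z) ^ 2

/-- `‖f‖₂²` with respect to `μ`. -/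
def normSq (μ f : (∀ i, V i) → ℝ) : ℝ := ∑ x, μ x * (f x) ^ 2

/-- `‖f‖₄⁴` with respect to `μ`. -/
def norm4p4 (μ f : (∀ i, V i) → ℝ) : ℝ := ∑ x, μ x * (f x) ^ 4

/-- `‖f‖₂` with respect to `μ`. -/
noncomputable def l2norm (μ f : (∀ i, V i) → ℝ) : ℝ := Real.sqrt (normSq μ f)

/-- `‖f‖_∞`: the maximum of `|f|` over the support of `μ`. -/
noncomputable def supNorm (μ f : (∀ i, V i) → ℝ) : ℝ :=
  sSup ((fun x => |f x|) '' {x | 0 < μ x})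

/-- Inner product `⟨f, g⟩ = E_{x∼μ}[f(x) g(x)]`. -/
def inner' (μ f g : (∀ i, V i) → ℝ) : ℝ := ∑ x, μ x * (f x * g x)

/-- The pair `{i,j}`-skeleton of `μ` is `ε`-pseudorandom. -/
def PairPseudo (μ : (∀ i, V i) → ℝ) (ε : ℝ) (i j : Fin k) : Prop :=
  ∀ (f₁ : V i → ℝ) (f₂ : V j → ℝ),
    |expect μ (fun x => f₁ (x i) * f₂ (x j)) -
        expect μ (fun x => f₁ (x i)) * expect μ (fun x => f₂ (x j))| ≤
      ε * Real.sqrt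
        ((expect μ (fun x => f₁ (x i) ^ 2) - expect μ (fun x => f₁ (x i)) ^ 2) *
          (expect μ (fun x => f₂ (x j) ^ 2) - expect μ (fun x => f₂ (x j)) ^ 2))

/-- `μ` is an `ε`-product measure: every link of every restriction of size `≤ k - 2`
has `ε`-pseudorandom skeletons. -/
def EpsProduct (μ : (∀ i, V i) → ℝ) (ε : ℝ) : Prop :=
  ∀ S : Finset (Fin k), S.card ≤ k - 2 → ∀ x, 0 < marg μ S x →
    ∀ i j : Fin k, i ∉ S → j ∉ S → i ≠ j → PairPseudo (cond μ S x) ε i j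

/-- `‖f(x,·)‖_{L²(μ_x)}` for `x ∈ V_S`. -/
noncomputable def restrictNorm (μ : (∀ i, V i) → ℝ) (S : Finset (Fin k)) (x : ∀ i, V i)
    (f : (∀ i, V i) → ℝ) : ℝ :=
  Real.sqrt (∑ z, cond μ S x z * (f z) ^ 2)

/-- `f` is `(d, δ)`-global: all restrictions of at most `d` coordinates have
`2`-norm at most `δ`. -/
def IsGlobal (μ : (∀ i, V i) → ℝ) (d : ℕ) (δ : ℝ) (f : (∀ i, V i) → ℝ) : Prop :=
  ∀ S : Finset (Fin k), S.card ≤ d → ∀ x, 0 < marg μ S x → restrictNorm μ S x f ≤ δ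

/-- `f` is an `S`-junta: it depends only on the coordinates in `S`. -/
def Junta (S : Finset (Fin k)) (f : (∀ i, V i) → ℝ) : Prop :=
  ∀ x y, (∀ i ∈ S, x i = y i) → f x = f y

/-- The noise operator `T_ρ f = ∑_{S ⊆ [k]} ρ^{|S|} (1-ρ)^{k-|S|} A_S f`. -/
noncomputable def noiseOp (μ : (∀ i, V i) → ℝ) (ρ : ℝ) (f : (∀ i, V i) → ℝ)
    (x : ∀ i, V i) : ℝ :=
  ∑ S ∈ (univ : Finset (Fin k)).powerset, ρ ^ S.card * (1 - ρ) ^ (k - S.card) * Aop μ S f x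

/-- The up-down walk operator `T = (1/k) ∑_{i=1}^k A_{[k]∖{i}}`. -/
noncomputable def upDown (μ : (∀ i, V i) → ℝ) (f : (∀ i, V i) → ℝ) (x : ∀ i, V i) : ℝ :=
  (1 / (k : ℝ)) * ∑ i : Fin k, Aop μ (univ.erase i) f x

/-- The product measure `μ₁ ⊗ ⋯ ⊗ μ_k`. -/
def prodMeasure (μi : ∀ i, V i → ℝ) : (∀ i, V i) → ℝ := fun x => ∏ i, μi i (x i)

/-- `f` has degree at most `d`: `f^{=S} = 0` whenever `|S| > d`. -/
def DegLe (μ : (∀ i, V i) → ℝ) (d : ℕ) (f : (∀ i, V i) → ℝ) : Prop :=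
  ∀ S : Finset (Fin k), d < S.card → ∀ x, ES μ S f x = 0

/-- `{F S}_{S ⊆ [k]}` is an `(α, ε')`-approximate Efron–Stein decomposition of `f`. -/
noncomputable def ApproxES (μ : (∀ i, V i) → ℝ) (α ε' : ℝ) (f : (∀ i, V i) → ℝ)
    (F : Finset (Fin k) → (∀ i, V i) → ℝ) : Prop :=
  l2norm μ f ≤ α ∧
    l2norm μ (fun x => f x - ∑ S ∈ (univ : Finset (Fin k)).powerset, F S x) ≤ ε' ∧
    ∀ S : Finset (Fin k), ∃ h : (∀ i, V i) → ℝ,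
      l2norm μ h ≤ α ∧ l2norm μ (fun x => ES μ S h x - F S x) ≤ ε'

/-!
Write `‖A_{S,T}‖²` for the squared norm of `A_{S,T}` on mean-zero functions. Conditioning on
`x_{S∩T}` reduces the claim to disjoint `S` and `T` inside a link, and the links of an `ε`-product
measure are again `ε`-product. For singletons, `‖A_{{i},{j}}‖ ≤ ε` is exactly the pseudorandomness of
the `{i,j}`-skeleton. Conditioning on one coordinate `j ∈ T` splits `‖A_T f - E f‖²` orthogonally
into `‖A_T f - A_{{j}} f‖²`, an average of instances of `A_{T∖{j}}` in links, and
`‖A_{{j}} f - E f‖²`; so the bound is additive in `|T|`. Since `A_{T,S}` is the adjoint of `A_{S,T}`,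
the bound is also symmetric in `S` and `T`. Tensorizing over `S` from pairs, transposing, and
tensorizing over `T` gives `|S|·|T|·ε²`.
-/

variable {μ : (∀ i, V i) → ℝ} {ε C : ℝ} {R S T : Finset (Fin k)} {f g : (∀ i, V i) → ℝ}
  {x y z : ∀ i, V i}

lemma le_of_sq_le_mul {a b : ℝ} (hb : 0 ≤ b) (h : a ^ 2 ≤ b * a) : a ≤ b := by
  nlinarith

section

omit [∀ i, DecidableEq (V i)]

lemma normSq_nonneg (hμ : ∀ y, 0 ≤ μ y) (f : (∀ i, V i) → ℝ) : 0 ≤ normSq μ f :=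
  sum_nonneg fun x _ => mul_nonneg (hμ x) (sq_nonneg _)

lemma inner'_sq_le (hμ : ∀ y, 0 ≤ μ y) (f g : (∀ i, V i) → ℝ) :
    inner' μ f g ^ 2 ≤ normSq μ f * normSq μ g :=
  sum_sq_le_sum_mul_sum_of_sq_le_mul _ (fun x _ => mul_nonneg (hμ x) (sq_nonneg _))
    (fun x _ => mul_nonneg (hμ x) (sq_nonneg _)) fun x _ => by ring_nf; rfl

lemma normSq_add_const (hμ : IsProb μ) {X : (∀ i, V i) → ℝ} (hX : expect μ X = 0) (c : ℝ) :
    normSq μ (fun z => X z + c) = normSq μ X + c ^ 2 := by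
  have h : ∀ z, μ z * (X z + c) ^ 2 = μ z * X z ^ 2 + 2 * c * (μ z * X z) + c ^ 2 * μ z :=
    fun z => by ring
  simp only [normSq, h, sum_add_distrib, ← mul_sum]
  rw [show ∑ z, μ z * X z = 0 from hX, hμ.2]
  ring

omit [∀ i, Fintype (V i)] in
lemma Junta.exists_eq_comp_eval {i : Fin k} (hf : Junta {i} f) :
    ∃ f₁ : V i → ℝ, f = fun x => f₁ (x i) := by
  rcases isEmpty_or_nonempty (∀ i, V i) with h | ⟨⟨x₀⟩⟩
  · exact ⟨fun _ => 0, funext fun x => (IsEmpty.false x).elim⟩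
  · exact ⟨fun a => f (Function.update x₀ i a), funext fun x => hf _ _ (by simp)⟩

lemma PairPseudo.abs_inner_sub_le {i j : Fin k} (h : PairPseudo μ ε i j) (hf : Junta {i} f)
    (hg : Junta {j} g) :
    |inner' μ f g - expect μ f * expect μ g|
      ≤ ε * √((normSq μ f - expect μ f ^ 2) * (normSq μ g - expect μ g ^ 2)) := by
  obtain ⟨f₁, rfl⟩ := hf.exists_eq_comp_eval
  obtain ⟨g₁, rfl⟩ := hg.exists_eq_comp_eval
  exact h f₁ g₁

lemma pairPseudo_comm {i j : Fin k} (h : PairPseudo μ ε i j) : PairPseudo μ ε j i := by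
  intro f₁ f₂
  have h' := h f₂ f₁
  simp_rw [mul_comm (f₂ _) (f₁ _)] at h'
  rwa [mul_comm (expect μ fun x => f₂ (x i)),
    mul_comm (expect μ (fun x => f₂ (x i) ^ 2) - _)] at h'

lemma pairPseudo_of_const_left (hε : 0 ≤ ε) (hμ : IsProb μ) {i : Fin k} (j : Fin k) {a : V i}
    (hconst : ∀ z, μ z ≠ 0 → z i = a) : PairPseudo μ ε i j := by
  intro f₁ f₂
  have hmul : ∀ F : (∀ i, V i) → ℝ, expect μ (fun x => f₁ (x i) * F x) = f₁ a * expect μ F := by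
    intro F
    rw [expect, expect, mul_sum]
    refine sum_congr rfl fun z _ => ?_
    by_cases hz : μ z = 0
    · simp [hz]
    · rw [hconst z hz]
      ring
  have hmean : expect μ (fun x => f₁ (x i)) = f₁ a := by
    simpa [expect, hμ.2] using hmul fun _ => 1
  rw [hmul fun x => f₂ (x j), hmean, sub_self, abs_zero]
  exact mul_nonneg hε (Real.sqrt_nonneg _)

end

lemma marg_nonneg (hμ : ∀ y, 0 ≤ μ y) (R : Finset (Fin k)) (x : ∀ i, V i) :
    0 ≤ marg μ R x :=
  sum_nonneg fun z _ => by split_ifs; exacts [hμ z, le_rfl]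

lemma le_marg (hμ : ∀ y, 0 ≤ μ y) (R : Finset (Fin k)) (x : ∀ i, V i) : μ x ≤ marg μ R x := by
  simpa [marg] using single_le_sum (f := fun z => if ∀ i ∈ R, z i = x i then μ z else 0)
    (fun z _ => by split_ifs; exacts [hμ z, le_rfl]) (mem_univ x)

lemma marg_pos (hμ : ∀ y, 0 ≤ μ y) (hx : μ x ≠ 0) : 0 < marg μ R x :=
  ((hμ x).lt_of_ne' hx).trans_le (le_marg hμ R x)

lemma marg_empty (hμ : IsProb μ) (x : ∀ i, V i) : marg μ ∅ x = 1 := by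
  simpa [marg] using hμ.2

lemma exists_agree_of_marg_ne_zero (h : marg μ R x ≠ 0) :
    ∃ z, μ z ≠ 0 ∧ ∀ i ∈ R, z i = x i := by
  obtain ⟨z, -, hz⟩ := exists_ne_zero_of_sum_ne_zero h
  split_ifs at hz with hzx
  · exact ⟨z, hz, hzx⟩
  · exact absurd rfl hz

lemma marg_congr (h : ∀ i ∈ R, z i = x i) : marg μ R z = marg μ R x :=
  sum_congr rfl fun w _ => if_congr (forall₂_congr fun i hi => by rw [h i hi]) rfl rfl

lemma cond_congr (h : ∀ i ∈ R, z i = x i) : cond μ R z = cond μ R x := by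
  funext w
  rw [cond, cond, marg_congr h]
  exact if_congr (forall₂_congr fun i hi => by rw [h i hi]) rfl rfl

lemma agree_of_cond_ne_zero (h : cond μ R x z ≠ 0) : ∀ i ∈ R, z i = x i := by
  by_contra hc
  exact h (if_neg hc)

lemma ne_zero_of_cond_ne_zero (h : cond μ R x z ≠ 0) : μ z ≠ 0 :=
  fun h0 => h (by simp [cond, h0])

lemma cond_nonneg (hμ : ∀ y, 0 ≤ μ y) (R : Finset (Fin k)) (x z : ∀ i, V i) :
    0 ≤ cond μ R x z := by
  rw [cond]
  split_ifs
  exacts [div_nonneg (hμ z) (marg_nonneg hμ R x), le_rfl]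

lemma sum_cond (hm : 0 < marg μ R x) : ∑ z, cond μ R x z = 1 := by
  have h : ∀ z, cond μ R x z = (if ∀ i ∈ R, z i = x i then μ z else 0) / marg μ R x := by
    intro z
    rw [cond]
    split_ifs <;> simp
  rw [sum_congr rfl fun z _ => h z, ← sum_div]
  exact div_self hm.ne'

lemma isProb_cond (hμ : ∀ y, 0 ≤ μ y) (hm : 0 < marg μ R x) : IsProb (cond μ R x) :=
  ⟨cond_nonneg hμ R x, sum_cond hm⟩

lemma cond_empty (hμ : IsProb μ) (x : ∀ i, V i) : cond μ ∅ x = μ := by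
  funext z
  simp [cond, marg_empty hμ]

lemma aop_empty (hμ : IsProb μ) (f : (∀ i, V i) → ℝ) (x : ∀ i, V i) :
    Aop μ ∅ f x = expect μ f := by
  rw [Aop, expect, cond_empty hμ]

lemma aop_congr (h : ∀ i ∈ T, x i = y i) : Aop μ T f x = Aop μ T f y := by
  simp only [Aop, cond_congr h]

lemma junta_aop_sub (μ : (∀ i, V i) → ℝ) (T : Finset (Fin k)) (f : (∀ i, V i) → ℝ) (c : ℝ) :
    Junta T (fun x => Aop μ T f x - c) :=
  fun _ _ h => by simp only [aop_congr h]

lemma sum_mul_cond (hμ : ∀ y, 0 ≤ μ y) (R : Finset (Fin k)) (z : ∀ i, V i) :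
    ∑ x, μ x * cond μ R x z = μ z := by
  have h : ∀ x, μ x * cond μ R x z
      = (if ∀ i ∈ R, x i = z i then μ x else 0) * (μ z / marg μ R z) := by
    intro x
    rw [cond]
    by_cases h : ∀ i ∈ R, z i = x i
    · rw [if_pos h, if_pos (fun i hi => (h i hi).symm),
        marg_congr (fun i hi => (h i hi).symm)]
    · rw [if_neg h, if_neg (fun h' => h fun i hi => (h' i hi).symm), mul_zero, zero_mul]
  rw [sum_congr rfl fun x _ => h x, ← sum_mul]
  change marg μ R z * (μ z / marg μ R z) = μ z
  rcases (marg_nonneg hμ R z).eq_or_lt with h0 | h0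
  · rw [← h0, zero_mul]
    exact (le_antisymm (h0 ▸ le_marg hμ R z) (hμ z)).symm
  · exact mul_div_cancel₀ _ h0.ne'

lemma expect_aop (hμ : ∀ y, 0 ≤ μ y) (R : Finset (Fin k)) (g : (∀ i, V i) → ℝ) :
    expect μ (fun x => Aop μ R g x) = expect μ g := by
  simp only [expect, Aop, mul_sum]
  rw [sum_comm]
  refine sum_congr rfl fun z _ => ?_
  rw [← sum_mul_cond hμ R z, sum_mul]
  exact sum_congr rfl fun x _ => by ring

lemma normSq_eq_sum_normSq_cond (hμ : ∀ y, 0 ≤ μ y) (R : Finset (Fin k))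
    (g : (∀ i, V i) → ℝ) : normSq μ g = ∑ x, μ x * normSq (cond μ R x) g := by
  simpa [expect, normSq, Aop] using (expect_aop hμ R (fun z => g z ^ 2)).symm

lemma normSq_cond_congr {g g' : (∀ i, V i) → ℝ} (h : ∀ z, (∀ i ∈ R, z i = x i) → g z = g' z) :
    normSq (cond μ R x) g = normSq (cond μ R x) g' := by
  refine sum_congr rfl fun z _ => ?_
  by_cases hz : cond μ R x z = 0
  · rw [hz, zero_mul, zero_mul]
  · rw [h z (agree_of_cond_ne_zero hz)]

lemma inner'_aop_left (hμ : ∀ y, 0 ≤ μ y) (f : (∀ i, V i) → ℝ) (hg : Junta T g) :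
    inner' μ (fun x => Aop μ T f x) g = inner' μ f g := by
  have h : ∀ x, μ x * (Aop μ T f x * g x) = ∑ z, μ x * cond μ T x z * (f z * g z) := by
    intro x
    rw [Aop, sum_mul, mul_sum]
    refine sum_congr rfl fun z _ => ?_
    by_cases hz : cond μ T x z = 0
    · simp [hz]
    · rw [hg x z fun i hi => (agree_of_cond_ne_zero hz i hi).symm]
      ring
  rw [inner', sum_congr rfl fun x _ => h x, sum_comm, inner']
  exact sum_congr rfl fun z _ => by rw [← sum_mul, sum_mul_cond hμ T z]

omit [∀ i, Fintype (V i)] [∀ i, DecidableEq (V i)] in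
lemma agree_union_iff {R' : Finset (Fin k)} {w : ∀ i, V i} (hwR : ∀ i ∈ R, w i = x i)
    (hwR' : ∀ i ∈ R', w i = y i) (z : ∀ i, V i) :
    (∀ i ∈ R ∪ R', z i = w i) ↔ (∀ i ∈ R, z i = x i) ∧ ∀ i ∈ R', z i = y i := by
  simp only [mem_union, or_imp, forall_and]
  exact and_congr (forall₂_congr fun i hi => by rw [hwR i hi])
    (forall₂_congr fun i hi => by rw [hwR' i hi])

lemma ite_cond_eq_div {R' : Finset (Fin k)} {w : ∀ i, V i} (hwR : ∀ i ∈ R, w i = x i)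
    (hwR' : ∀ i ∈ R', w i = y i) (z : ∀ i, V i) :
    (if ∀ i ∈ R', z i = y i then cond μ R x z else 0)
      = (if ∀ i ∈ R ∪ R', z i = w i then μ z else 0) / marg μ R x := by
  simp only [cond, agree_union_iff hwR hwR' z]
  split_ifs <;> simp_all

lemma cond_cond {R' : Finset (Fin k)} {w : ∀ i, V i} (hm : 0 < marg μ R x)
    (hwR : ∀ i ∈ R, w i = x i) (hwR' : ∀ i ∈ R', w i = y i) :
    cond (cond μ R x) R' y = cond μ (R ∪ R') w := by
  have hmarg : marg (cond μ R x) R' y = marg μ (R ∪ R') w / marg μ R x := by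
    simp only [marg, ite_cond_eq_div hwR hwR', ← sum_div]
  funext z
  simp only [cond, hmarg, agree_union_iff hwR hwR' z]
  split_ifs <;> simp_all [div_div_div_cancel_right₀ hm.ne']

lemma aop_cond (hm : 0 < marg μ R x) (hz : ∀ i ∈ R, z i = x i) (hRT : R ⊆ T)
    (f : (∀ i, V i) → ℝ) : Aop (cond μ R x) (T \ R) f z = Aop μ T f z := by
  simp only [Aop, cond_cond hm hz (fun _ _ => rfl), union_sdiff_of_subset hRT]

lemma pairPseudo_cond_of_mem (hε : 0 ≤ ε) (hμ : ∀ y, 0 ≤ μ y) (hm : 0 < marg μ R x)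
    {i : Fin k} (hi : i ∈ R) (j : Fin k) : PairPseudo (cond μ R x) ε i j :=
  pairPseudo_of_const_left hε (isProb_cond hμ hm) j fun _ hz => agree_of_cond_ne_zero hz i hi

/-- `EpsProduct` extended to links of every size and to pairs containing a fixed coordinate (whose
skeleton is trivially pseudorandom), so that the property passes to links. -/
def LinksPseudorandom (μ : (∀ i, V i) → ℝ) (ε : ℝ) : Prop :=
  ∀ R : Finset (Fin k), ∀ x, 0 < marg μ R x → ∀ i j : Fin k, i ≠ j → PairPseudo (cond μ R x) ε i j

lemma EpsProduct.linksPseudorandom (hε : 0 ≤ ε) (hμ : ∀ y, 0 ≤ μ y) (h : EpsProduct μ ε) :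
    LinksPseudorandom μ ε := by
  intro R x hm i j hij
  by_cases hi : i ∈ R
  · exact pairPseudo_cond_of_mem hε hμ hm hi j
  by_cases hj : j ∈ R
  · exact pairPseudo_comm (pairPseudo_cond_of_mem hε hμ hm hj i)
  have hcard : (insert i (insert j R)).card = R.card + 2 := by
    rw [card_insert_of_notMem (by simp [hij, hi]), card_insert_of_notMem hj]
  have hk := card_le_univ (insert i (insert j R))
  rw [hcard, Fintype.card_fin] at hk
  exact h R (by omega) x hm i j hi hj hij

lemma LinksPseudorandom.cond (hμ : ∀ y, 0 ≤ μ y) (h : LinksPseudorandom μ ε)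
    (hm : 0 < marg μ R x) : LinksPseudorandom (cond μ R x) ε := by
  intro R' y hm' i j hij
  obtain ⟨z, hz, hzy⟩ := exists_agree_of_marg_ne_zero hm'.ne'
  rw [cond_cond hm (agree_of_cond_ne_zero hz) hzy]
  exact h _ z (marg_pos hμ (ne_zero_of_cond_ne_zero hz)) i j hij

lemma LinksPseudorandom.pairPseudo (hμ : IsProb μ) (h : LinksPseudorandom μ ε) {i j : Fin k}
    (hij : i ≠ j) : PairPseudo μ ε i j := by
  obtain ⟨x, -⟩ : ∃ x, μ x ≠ 0 := by
    obtain ⟨x, -, hx⟩ := exists_ne_zero_of_sum_ne_zero (hμ.2 ▸ one_ne_zero)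
    exact ⟨x, hx⟩
  simpa [cond_empty hμ] using h ∅ x (by simp [marg_empty hμ]) i j hij

lemma expect_aop_sub_expect (hμ : IsProb μ) (T : Finset (Fin k)) (f : (∀ i, V i) → ℝ) :
    expect μ (fun x => Aop μ T f x - expect μ f) = 0 := by
  have h := expect_aop hμ.1 T f
  simp only [expect, mul_sub, sum_sub_distrib, ← sum_mul, hμ.2, one_mul] at h ⊢
  rw [h, sub_self]

lemma inner'_aop_sub_expect (hμ : IsProb μ) (f : (∀ i, V i) → ℝ) (hg : Junta T g) :
    inner' μ (fun x => Aop μ T f x - expect μ f) g = inner' μ f g - expect μ f * expect μ g := by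
  rw [← inner'_aop_left hμ.1 f hg]
  simp only [inner', expect, mul_sum, ← sum_sub_distrib]
  exact sum_congr rfl fun x _ => by ring

lemma normSq_aop_sub_expect (hμ : IsProb μ) (T : Finset (Fin k)) (f : (∀ i, V i) → ℝ) :
    normSq μ (fun x => Aop μ T f x - expect μ f)
      = inner' μ f (fun x => Aop μ T f x - expect μ f) := by
  have h := inner'_aop_sub_expect hμ f (junta_aop_sub μ T f (expect μ f))
  rw [expect_aop_sub_expect hμ, mul_zero, sub_zero] at h
  rw [← h]
  simp only [normSq, inner', sq]

lemma normSq_cond_aop_sub (hμ : ∀ y, 0 ≤ μ y) (hm : 0 < marg μ R x) (hRT : R ⊆ T)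
    (f : (∀ i, V i) → ℝ) (c : ℝ) :
    normSq (cond μ R x) (fun z => Aop μ T f z - c)
      = normSq (cond μ R x) (fun z => Aop (cond μ R x) (T \ R) f z - expect (cond μ R x) f)
        + (Aop μ R f x - c) ^ 2 := by
  have hν := isProb_cond hμ hm
  rw [← normSq_add_const hν (expect_aop_sub_expect hν _ f)]
  refine normSq_cond_congr fun z hz => ?_
  rw [aop_cond hm hz hRT, show expect (cond μ R x) f = Aop μ R f x from rfl]
  ring

lemma normSq_aop_sub_aop (hμ : ∀ y, 0 ≤ μ y) (hRT : R ⊆ T) (f : (∀ i, V i) → ℝ) :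
    normSq μ (fun x => Aop μ T f x - Aop μ R f x)
      = ∑ x, μ x * normSq (cond μ R x)
          (fun z => Aop (cond μ R x) (T \ R) f z - expect (cond μ R x) f) := by
  rw [normSq_eq_sum_normSq_cond hμ R]
  refine sum_congr rfl fun x _ => ?_
  by_cases hx : μ x = 0
  · simp [hx]
  have hm := marg_pos (R := R) hμ hx
  rw [normSq_cond_congr (g' := fun z => Aop μ T f z - Aop μ R f x)
      fun z hz => by rw [aop_congr hz], normSq_cond_aop_sub hμ hm hRT, sub_self]
  ring

lemma normSq_aop_sub_expect_eq_add (hμ : IsProb μ) (hRT : R ⊆ T) (f : (∀ i, V i) → ℝ) :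
    normSq μ (fun x => Aop μ T f x - expect μ f)
      = normSq μ (fun x => Aop μ T f x - Aop μ R f x)
        + normSq μ (fun x => Aop μ R f x - expect μ f) := by
  rw [normSq_aop_sub_aop hμ.1 hRT, normSq_eq_sum_normSq_cond hμ.1 R, normSq, ← sum_add_distrib]
  refine sum_congr rfl fun x _ => ?_
  by_cases hx : μ x = 0
  · simp [hx]
  rw [normSq_cond_aop_sub hμ.1 (marg_pos hμ.1 hx) hRT]
  ring

variable (V) in
/-- `C` bounds the squared norm of `A_{S,T}` on mean-zero functions, uniformly over all measures
whose links are `ε`-pseudorandom; the uniformity is what lets a bound be applied inside links. -/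
def AvgNormBound (ε : ℝ) (S T : Finset (Fin k)) (C : ℝ) : Prop :=
  ∀ μ : (∀ i, V i) → ℝ, IsProb μ → LinksPseudorandom μ ε → ∀ f, Junta S f →
    normSq μ (fun x => Aop μ T f x - expect μ f) ≤ C * normSq μ f

lemma AvgNormBound.mono {D : ℝ} (h : AvgNormBound V ε S T C) (hCD : C ≤ D) :
    AvgNormBound V ε S T D :=
  fun μ hμ hL f hf => (h μ hμ hL f hf).trans (by gcongr; exact normSq_nonneg hμ.1 f)

lemma AvgNormBound.normSq_aop_sub_aop_le (h : AvgNormBound V ε S (T \ R) C)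
    (hμ : ∀ y, 0 ≤ μ y) (hL : LinksPseudorandom μ ε) (hRT : R ⊆ T) (hf : Junta S f) :
    normSq μ (fun x => Aop μ T f x - Aop μ R f x) ≤ C * normSq μ f := by
  rw [normSq_aop_sub_aop hμ hRT, normSq_eq_sum_normSq_cond hμ R, mul_sum]
  refine sum_le_sum fun x _ => ?_
  by_cases hx : μ x = 0
  · simp [hx]
  have hm := marg_pos (R := R) hμ hx
  rw [mul_left_comm]
  exact mul_le_mul_of_nonneg_left (h _ (isProb_cond hμ hm) (hL.cond hμ hm) f hf) (hμ x)

lemma avgNormBound_pair (hε : 0 ≤ ε) {i j : Fin k} (hij : i ≠ j) :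
    AvgNormBound V ε {i} {j} (ε ^ 2) := by
  intro μ hμ hL f hf
  have hcov := (hL.pairPseudo hμ hij).abs_inner_sub_le hf (junta_aop_sub μ {j} f (expect μ f))
  rw [expect_aop_sub_expect hμ, mul_zero, sub_zero, sq 0, mul_zero, sub_zero,
    ← normSq_aop_sub_expect hμ] at hcov
  set g := fun x => Aop μ {j} f x - expect μ f
  have hf0 := normSq_nonneg hμ.1 f
  have hg0 := normSq_nonneg hμ.1 g
  have hle : normSq μ g ≤ ε * √(normSq μ f * normSq μ g) :=
    (le_abs_self _).trans <| hcov.trans <| by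
      gcongr
      exact sub_le_self _ (sq_nonneg _)
  refine le_of_sq_le_mul (mul_nonneg (sq_nonneg ε) hf0) ?_
  calc normSq μ g ^ 2 ≤ (ε * √(normSq μ f * normSq μ g)) ^ 2 := pow_le_pow_left₀ hg0 hle 2
    _ = ε ^ 2 * normSq μ f * normSq μ g := by
      rw [mul_pow, Real.sq_sqrt (mul_nonneg hf0 hg0)]
      ring

lemma AvgNormBound.symm (hC : 0 ≤ C) (h : AvgNormBound V ε S T C) : AvgNormBound V ε T S C := by
  intro μ hμ hL f hf
  set g := fun x => Aop μ S f x - expect μ f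
  have hg : Junta S g := junta_aop_sub μ S f _
  have hEg : expect μ g = 0 := expect_aop_sub_expect hμ S f
  have hf0 := normSq_nonneg hμ.1 f
  have hg0 := normSq_nonneg hμ.1 g
  have hdual : normSq μ g = inner' μ (fun x => Aop μ T g x - expect μ g) f := by
    rw [inner'_aop_sub_expect hμ g hf, hEg, zero_mul, sub_zero, normSq_aop_sub_expect hμ]
    simp only [inner', mul_comm (f _)]
    rfl
  refine le_of_sq_le_mul (mul_nonneg hC hf0) ?_
  calc normSq μ g ^ 2
      ≤ normSq μ (fun x => Aop μ T g x - expect μ g) * normSq μ f := by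
        rw [hdual]
        exact inner'_sq_le hμ.1 _ _
    _ ≤ C * normSq μ g * normSq μ f := by gcongr; exact h μ hμ hL g hg
    _ = C * normSq μ f * normSq μ g := by ring

lemma AvgNormBound.of_forall_singleton (h : ∀ j ∈ T, AvgNormBound V ε S {j} C) :
    AvgNormBound V ε S T (T.card * C) := by
  induction T using Finset.induction_on with
  | empty =>
    intro μ hμ _ f _
    simp [aop_empty hμ, normSq]
  | insert j T hj ih =>
    have hT := ih fun l hl => h l (mem_insert_of_mem hl)
    have hTj : insert j T \ {j} = T := by rw [sdiff_singleton_eq_erase, erase_insert hj]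
    intro μ hμ hL f hf
    rw [normSq_aop_sub_expect_eq_add hμ (singleton_subset_iff.2 (mem_insert_self j T)),
      card_insert_of_notMem hj]
    have h₁ := AvgNormBound.normSq_aop_sub_aop_le (C := T.card * C) (by rwa [hTj]) hμ.1 hL
      (singleton_subset_iff.2 (mem_insert_self j T)) hf
    have h₂ := h j (mem_insert_self j T) μ hμ hL f hf
    push_cast
    linarith

lemma avgNormBound_of_disjoint (hε : 0 ≤ ε) (hST : Disjoint S T) :
    AvgNormBound V ε S T (S.card * T.card * ε ^ 2) := by
  have hS : ∀ j ∈ T, AvgNormBound V ε S {j} (S.card * ε ^ 2) := fun j hj =>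
    (AvgNormBound.of_forall_singleton fun i hi =>
      avgNormBound_pair hε fun hji => disjoint_left.1 hST hi (hji ▸ hj)).symm (by positivity)
  convert AvgNormBound.of_forall_singleton hS using 1
  ring

theorem statement10_general (k : ℕ)
    (V : Fin k → Type) [∀ i, Fintype (V i)] [∀ i, DecidableEq (V i)]
    (μ : (∀ i, V i) → ℝ) (ε : ℝ) (hε : 0 ≤ ε) (hμ : IsProb μ) (hprod : EpsProduct μ ε)
    (S T : Finset (Fin k)) (f : (∀ i, V i) → ℝ) (hf : Junta S f) :
    normSq μ (fun x => Aop μ T f x - Aop μ (S ∩ T) f x) ≤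
      (S.card : ℝ) * T.card * ε ^ 2 * normSq μ f := by
  have hdisj : Disjoint S (T \ (S ∩ T)) := sdiff_inter_self_right T S ▸ disjoint_sdiff
  have hcard : ((T \ (S ∩ T)).card : ℝ) ≤ T.card := by exact_mod_cast card_le_card sdiff_subset
  have hbound := (avgNormBound_of_disjoint (V := V) hε hdisj).mono
    (by gcongr : (S.card : ℝ) * (T \ (S ∩ T)).card * ε ^ 2 ≤ S.card * T.card * ε ^ 2)
  exact hbound.normSq_aop_sub_aop_le hμ.1 (hprod.linksPseudorandom hε hμ.1) inter_subset_right hf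

theorem statement10 (k : ℕ) (hk : 1 ≤ k)
    (V : Fin k → Type) [∀ i, Fintype (V i)] [∀ i, DecidableEq (V i)]
    (μ : (∀ i, V i) → ℝ) (ε : ℝ) (hε : 0 ≤ ε) (hμ : IsProb μ) (hprod : EpsProduct μ ε)
    (S T : Finset (Fin k)) (f : (∀ i, V i) → ℝ) (hf : Junta S f) :
    normSq μ (fun x => Aop μ T f x - Aop μ (S ∩ T) f x) ≤
      (S.card : ℝ) * T.card * ε ^ 2 * normSq μ f :=
  statement10_general k V μ ε hε hμ hprod S T f hf

end GLL
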